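/- (Generalized Noether theorem, converse direction.) Let H_e : ℝⁿ × ℝⁿ × ℝ × ℝ → ℝ be continuously differentiable and I : ℝⁿ × ℝⁿ × ℝ × ℝ → ℝ be differentiable. If for every differentiable solution s ↦ z(s) of the extended canonical equations for H_e the function s ↦ I(z(s)) is constant, then the extended Poisson bracket [H_e, I]_ext vanishes at every point of ℝⁿ × ℝⁿ × ℝ × ℝ. -/

import Mathlib

/-- The extended phase space `ℝⁿ × ℝⁿ × ℝ × ℝ` with coordinates `(q, p, t, e)`. -/
abbrev ExtPhase (n : ℕ) : Type := (Fin n → ℝ) × (Fin n → ℝ) × ℝ × ℝ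

/-- Partial derivative `∂F/∂qⁱ`. -/
noncomputable def pdQ {n : ℕ} (F : ExtPhase n → ℝ) (i : Fin n) (z : ExtPhase n) : ℝ :=
  fderiv ℝ F z (Pi.single i 1, 0, 0, 0)

/-- Partial derivative `∂F/∂pᵢ`. -/
noncomputable def pdP {n : ℕ} (F : ExtPhase n → ℝ) (i : Fin n) (z : ExtPhase n) : ℝ :=
  fderiv ℝ F z (0, Pi.single i 1, 0, 0)

/-- Partial derivative `∂F/∂t`. -/
noncomputable def pdT {n : ℕ} (F : ExtPhase n → ℝ) (z : ExtPhase n) : ℝ :=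
  fderiv ℝ F z (0, 0, 1, 0)

/-- Partial derivative `∂F/∂e`. -/
noncomputable def pdE {n : ℕ} (F : ExtPhase n → ℝ) (z : ExtPhase n) : ℝ :=
  fderiv ℝ F z (0, 0, 0, 1)

/-- The extended Hamiltonian vector field: the extended canonical equations read
`dq/ds = ∂He/∂p`, `dp/ds = −∂He/∂q`, `dt/ds = −∂He/∂e`, `de/ds = ∂He/∂t`. -/
noncomputable def extVF {n : ℕ} (He : ExtPhase n → ℝ) (z : ExtPhase n) : ExtPhase n :=
  (fun i => pdP He i z, fun i => -pdQ He i z, -pdE He z, pdT He z)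

/-- The extended Poisson bracket
`[F,G]_ext = Σᵢ (∂F/∂qⁱ ∂G/∂pᵢ − ∂F/∂pᵢ ∂G/∂qⁱ) − ∂F/∂t ∂G/∂e + ∂F/∂e ∂G/∂t`. -/
noncomputable def extPB {n : ℕ} (F G : ExtPhase n → ℝ) (z : ExtPhase n) : ℝ :=
  (∑ i, (pdQ F i z * pdP G i z - pdP F i z * pdQ G i z))
    - pdT F z * pdE G z + pdE F z * pdT G z

/-!
Along a solution `z` of the extended canonical equations, `(I ∘ z)' = DI(z) · X(z)` with `X` the
extended Hamiltonian vector field, and expanding in partial derivatives gives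
`DI · X = -[He, I]_ext`. It therefore suffices to have a solution through every point on some
interval `[0, ε]`. As `He` is only `C¹`, `X` is merely continuous, so this is Peano's theorem rather
than Picard–Lindelöf. It is proved with Tonelli's delayed approximations
`x_δ(s) = x₀ + ∫₀^s v (x_δ (u - δ)) du`: they are explicit, stay in a ball on which `v` is bounded
by `K`, and are `K`-Lipschitz, so Arzelà–Ascoli yields a convergent subsequence as `δ → 0`, and
dominated convergence passes to the limit in the integral equation.
-/

open Set Filter Topology MeasureTheory intervalIntegral
open scoped NNReal BoundedContinuousFunction

theorem exists_subseq_tendsto_of_lipschitzWith {X E : Type*} [PseudoMetricSpace X]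
    [CompactSpace X] [MetricSpace E] {K : ℝ≥0} {s : Set E} (hs : IsCompact s)
    {F : ℕ → X → E} (hF : ∀ k, LipschitzWith K (F k)) (hFs : ∀ k x, F k x ∈ s) :
    ∃ f : X → E, Continuous f ∧ ∃ φ : ℕ → ℕ, StrictMono φ ∧
      TendstoUniformly (fun k => F (φ k)) f atTop := by
  let G : ℕ → X →ᵇ E := fun k => .mkOfCompact ⟨F k, (hF k).continuous⟩
  have hG : IsCompact (closure (range G)) := by
    refine BoundedContinuousFunction.arzela_ascoli s hs _ (by rintro _ x ⟨k, rfl⟩; exact hFs k x) ?_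
    refine (LipschitzWith.uniformEquicontinuous _ K ?_).equicontinuous
    rintro ⟨_, k, rfl⟩
    exact hF k
  obtain ⟨f, -, φ, hφ, hlim⟩ := hG.tendsto_subseq fun k => subset_closure (mem_range_self k)
  exact ⟨f, f.continuous, φ, hφ, BoundedContinuousFunction.tendsto_iff_tendstoUniformly.1 hlim⟩

theorem tendsto_apply_sub_of_lipschitzOnWith {E : Type*} [PseudoMetricSpace E] {K : ℝ≥0}
    {F : ℕ → ℝ → E} {δ : ℕ → ℝ} {u : ℝ} {y : E} (hF : ∀ k, LipschitzOnWith K (F k) (Iic u))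
    (hδ : Tendsto δ atTop (𝓝 0)) (hδ₀ : ∀ k, 0 ≤ δ k)
    (hy : Tendsto (fun k => F k u) atTop (𝓝 y)) :
    Tendsto (fun k => F k (u - δ k)) atTop (𝓝 y) := by
  rw [tendsto_iff_dist_tendsto_zero] at hy ⊢
  have hbound : ∀ k, dist (F k (u - δ k)) y ≤ K * δ k + dist (F k u) y := fun k => by
    refine (dist_triangle _ (F k u) _).trans (add_le_add_left ?_ _)
    calc dist (F k (u - δ k)) (F k u) ≤ K * dist (u - δ k) u :=
          (hF k).dist_le_mul _ (by simp [hδ₀ k]) _ self_mem_Iic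
      _ = K * δ k := by rw [Real.dist_eq, sub_sub_cancel_left, abs_neg, abs_of_nonneg (hδ₀ k)]
  refine squeeze_zero (fun k => dist_nonneg) hbound ?_
  simpa using (hδ.const_mul (K : ℝ)).add hy

section DelayedApprox

variable {E : Type*} [NormedAddCommGroup E] [NormedSpace ℝ E]

-- Indexing by `j` resolves the delay: on `s ≤ j * δ` the `j`-th iterate already solves the
-- delayed integral equation (`delayedApprox_eq_integral`).
noncomputable def delayedApprox (v : E → E) (x₀ : E) (δ : ℝ) : ℕ → ℝ → E
  | 0 => fun _ => x₀
  | j + 1 => fun s => x₀ + ∫ u in (0 : ℝ)..max s 0, v (delayedApprox v x₀ δ j (u - δ))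

variable {v : E → E} {x₀ : E} {δ ε r : ℝ} {K : ℝ≥0}

theorem delayedApprox_succ (j : ℕ) (s : ℝ) :
    delayedApprox v x₀ δ (j + 1) s
      = x₀ + ∫ u in (0 : ℝ)..max s 0, v (delayedApprox v x₀ δ j (u - δ)) := rfl

theorem continuous_delayedApprox (hv : Continuous v) (j : ℕ) :
    Continuous (delayedApprox v x₀ δ j) := by
  induction j with
  | zero => exact continuous_const
  | succ j ih =>
    have hint : Continuous fun u => v (delayedApprox v x₀ δ j (u - δ)) := by fun_prop
    exact continuous_const.add
      ((continuous_primitive (fun a b => hint.intervalIntegrable a b) 0).comp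
        (continuous_id.max continuous_const))

theorem delayedApprox_of_nonpos (j : ℕ) {s : ℝ} (hs : s ≤ 0) : delayedApprox v x₀ δ j s = x₀ := by
  cases j with
  | zero => rfl
  | succ j => rw [delayedApprox_succ, max_eq_right hs, integral_same, add_zero]

theorem delayedApprox_mem_closedBall (hK : ∀ x ∈ Metric.closedBall x₀ r, ‖v x‖ ≤ K)
    (hε₀ : 0 ≤ ε) (hε : K * ε ≤ r) (hδ : 0 ≤ δ) (j : ℕ) :
    ∀ s ≤ ε, delayedApprox v x₀ δ j s ∈ Metric.closedBall x₀ r := by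
  have hr : 0 ≤ r := (mul_nonneg K.2 hε₀).trans hε
  induction j with
  | zero => intro s _; exact Metric.mem_closedBall_self hr
  | succ j ih =>
    intro s hs
    rw [delayedApprox_succ, mem_closedBall_iff_norm, add_sub_cancel_left]
    rcases le_total s 0 with hs0 | hs0
    · rw [max_eq_right hs0, integral_same, norm_zero]; exact hr
    rw [max_eq_left hs0]
    calc ‖∫ u in (0 : ℝ)..s, v (delayedApprox v x₀ δ j (u - δ))‖
        ≤ K * |s - 0| := norm_integral_le_of_norm_le_const fun u hu =>
          hK _ (ih _ (by rw [uIoc_of_le hs0] at hu; linarith [hu.2]))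
      _ ≤ K * ε := by rw [sub_zero, abs_of_nonneg hs0]; gcongr
      _ ≤ r := hε

theorem lipschitzOnWith_delayedApprox (hv : Continuous v)
    (hK : ∀ x ∈ Metric.closedBall x₀ r, ‖v x‖ ≤ K) (hε₀ : 0 ≤ ε) (hε : K * ε ≤ r) (hδ : 0 ≤ δ)
    (j : ℕ) : LipschitzOnWith K (delayedApprox v x₀ δ j) (Iic ε) := by
  refine LipschitzOnWith.of_dist_le_mul fun s₁ hs₁ s₂ hs₂ => ?_
  cases j with
  | zero => simp only [delayedApprox, dist_self]; positivity
  | succ j =>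
    have hint : Continuous fun u => v (delayedApprox v x₀ δ j (u - δ)) :=
      hv.comp ((continuous_delayedApprox hv j).comp (continuous_id.sub continuous_const))
    rw [dist_eq_norm, delayedApprox_succ, delayedApprox_succ, add_sub_add_left_eq_sub,
      integral_interval_sub_left (hint.intervalIntegrable _ _) (hint.intervalIntegrable _ _)]
    calc ‖∫ u in (max s₂ 0)..(max s₁ 0), v (delayedApprox v x₀ δ j (u - δ))‖
        ≤ K * |max s₁ 0 - max s₂ 0| := norm_integral_le_of_norm_le_const fun u hu => by
          have hu' : u ≤ ε := hu.2.trans (max_le (max_le hs₂ hε₀) (max_le hs₁ hε₀))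
          exact hK _ (delayedApprox_mem_closedBall hK hε₀ hε hδ j _ (by linarith))
      _ ≤ K * dist s₁ s₂ := by gcongr; exact abs_max_sub_max_le_abs s₁ s₂ 0

theorem delayedApprox_succ_eq (hδ : 0 < δ) (j : ℕ) :
    ∀ s ≤ j * δ, delayedApprox v x₀ δ (j + 1) s = delayedApprox v x₀ δ j s := by
  induction j with
  | zero =>
    intro s hs
    have hs0 : s ≤ 0 := by simpa using hs
    rw [delayedApprox_of_nonpos 1 hs0, delayedApprox_of_nonpos 0 hs0]
  | succ j ih =>
    intro s hs
    rw [delayedApprox_succ, delayedApprox_succ]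
    congr 1
    refine integral_congr fun u hu => ?_
    rw [uIcc_of_le (le_max_right s 0)] at hu
    have hmax : max s 0 ≤ j * δ + δ := max_le (by push_cast at hs; linarith) (by positivity)
    rw [ih (u - δ) (by linarith [hu.2])]

theorem delayedApprox_eq_integral (hδ : 0 < δ) {j : ℕ} {s : ℝ} (hs₀ : 0 ≤ s) (hs : s ≤ j * δ) :
    delayedApprox v x₀ δ j s = x₀ + ∫ u in (0 : ℝ)..s, v (delayedApprox v x₀ δ j (u - δ)) := by
  rw [← delayedApprox_succ_eq hδ j s hs, delayedApprox_succ, max_eq_left hs₀]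

end DelayedApprox

section Peano

variable {E : Type*} [NormedAddCommGroup E] [NormedSpace ℝ E] {v : E → E} {x₀ : E}

theorem eq_integral_of_tendsto_delayed (hv : Continuous v) {K : ℝ≥0} {M s : ℝ} (hs : 0 ≤ s)
    {F : ℕ → ℝ → E} {δ : ℕ → ℝ} {f : ℝ → E} (hF : ∀ k, Continuous (F k))
    (hFv : ∀ k, ∀ u ≤ s, ‖v (F k u)‖ ≤ M) (hFlip : ∀ k, LipschitzOnWith K (F k) (Iic s))
    (hδ : Tendsto δ atTop (𝓝 0)) (hδ₀ : ∀ k, 0 ≤ δ k)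
    (hFf : ∀ u ∈ Icc 0 s, Tendsto (fun k => F k u) atTop (𝓝 (f u)))
    (hFeq : ∀ k, F k s = x₀ + ∫ u in (0 : ℝ)..s, v (F k (u - δ k))) :
    f s = x₀ + ∫ u in (0 : ℝ)..s, v (f u) := by
  refine tendsto_nhds_unique ((hFf s ⟨hs, le_rfl⟩).congr hFeq) (Tendsto.const_add _ ?_)
  refine tendsto_integral_filter_of_dominated_convergence (fun _ => M)
    (Eventually.of_forall fun k => ?_) (Eventually.of_forall fun k => ?_)
    intervalIntegrable_const (ae_of_all _ fun u hu => ?_)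
  · exact (hv.comp ((hF k).comp (continuous_id.sub continuous_const))).aestronglyMeasurable
  · refine ae_of_all _ fun u hu => hFv k _ ?_
    rw [uIoc_of_le hs] at hu
    linarith [hu.2, hδ₀ k]
  · rw [uIoc_of_le hs] at hu
    exact (hv.tendsto _).comp (tendsto_apply_sub_of_lipschitzOnWith
      (fun k => (hFlip k).mono (Iic_subset_Iic.2 hu.2)) hδ hδ₀ (hFf u ⟨hu.1.le, hu.2⟩))

theorem exists_forall_mem_Icc_eq_integral_of_continuous [ProperSpace E] (hv : Continuous v)
    (x₀ : E) : ∃ ε > 0, ∃ f : ℝ → E, Continuous f ∧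
      ∀ s ∈ Icc 0 ε, f s = x₀ + ∫ u in (0 : ℝ)..s, v (f u) := by
  obtain ⟨C, hC⟩ := (isCompact_closedBall x₀ 1).exists_bound_of_continuousOn hv.continuousOn
  set K : ℝ≥0 := C.toNNReal + 1
  have hK : ∀ x ∈ Metric.closedBall x₀ 1, ‖v x‖ ≤ K := fun x hx =>
    (hC x hx).trans <| C.le_coe_toNNReal.trans (by simp [K])
  set ε : ℝ := (K : ℝ)⁻¹
  have hε : 0 < ε := inv_pos.2 (by positivity)
  have hKε : K * ε ≤ 1 := (mul_inv_cancel₀ (by positivity)).le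
  set δ : ℕ → ℝ := fun k => ε / (k + 1)
  have hδ : ∀ k, 0 < δ k := fun k => by positivity
  have hδε : ∀ k, ((k + 1 : ℕ) : ℝ) * δ k = ε := fun k => by simp only [δ]; push_cast; field_simp
  set F : ℕ → ℝ → E := fun k => delayedApprox v x₀ (δ k) (k + 1)
  have hFlip : ∀ k, LipschitzOnWith K (F k) (Iic ε) := fun k =>
    lipschitzOnWith_delayedApprox hv hK hε.le hKε (hδ k).le _
  have hFball : ∀ k, ∀ s ≤ ε, F k s ∈ Metric.closedBall x₀ 1 := fun k =>
    delayedApprox_mem_closedBall hK hε.le hKε (hδ k).le _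
  obtain ⟨g, hg, φ, hφ, hFg⟩ := exists_subseq_tendsto_of_lipschitzWith (isCompact_closedBall x₀ 1)
    (F := fun k => (Icc 0 ε).domRestrict (F k))
    (fun k => ((hFlip k).mono Icc_subset_Iic_self).to_restrict) (fun k x => hFball k x x.2.2)
  have hδφ : Tendsto (fun k => δ (φ k)) atTop (𝓝 0) := by
    have := (tendsto_one_div_add_atTop_nhds_zero_nat.const_mul ε).comp hφ.tendsto_atTop
    simpa [δ, div_eq_mul_inv, Function.comp_def] using this
  refine ⟨ε, hε, IccExtend hε.le g, hg.Icc_extend', fun s hs => ?_⟩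
  refine eq_integral_of_tendsto_delayed hv hs.1 (F := fun k => F (φ k)) (K := K)
    (fun k => continuous_delayedApprox hv _) (fun k u hu => hK _ (hFball _ u (hu.trans hs.2)))
    (fun k => (hFlip _).mono (Iic_subset_Iic.2 hs.2)) hδφ (fun k => (hδ _).le) (fun u hu => ?_)
    (fun k => delayedApprox_eq_integral (hδ _) hs.1 ((hδε _).symm ▸ hs.2))
  rw [IccExtend_of_mem _ _ ⟨hu.1, hu.2.trans hs.2⟩]
  exact hFg.tendsto_at ⟨u, hu.1, hu.2.trans hs.2⟩

theorem hasDerivWithinAt_of_forall_eq_integral [CompleteSpace E] {g f : ℝ → E}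
    (hg : Continuous g) {S : Set ℝ} {a s : ℝ} {c : E} (hf : ∀ s ∈ S, f s = c + ∫ u in a..s, g u) (hs : s ∈ S) :
    HasDerivWithinAt f (g s) S s :=
  ((hg.integral_hasStrictDerivAt a s).hasDerivAt.const_add c).hasDerivWithinAt.congr hf (hf s hs)

theorem exists_eq_forall_mem_Icc_hasDerivWithinAt_of_continuous [ProperSpace E]
    (hv : Continuous v) (x₀ : E) : ∃ ε > 0, ∃ f : ℝ → E, f 0 = x₀ ∧
      ∀ s ∈ Icc 0 ε, HasDerivWithinAt f (v (f s)) (Icc 0 ε) s := by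
  obtain ⟨ε, hε, f, hf, hfint⟩ := exists_forall_mem_Icc_eq_integral_of_continuous hv x₀
  refine ⟨ε, hε, f, by simpa using hfint 0 ⟨le_rfl, hε.le⟩, fun s hs => ?_⟩
  exact hasDerivWithinAt_of_forall_eq_integral (hv.comp hf) hfint hs

end Peano

theorem continuous_extVF {n : ℕ} {He : ExtPhase n → ℝ} (hHe : ContDiff ℝ 1 He) :
    Continuous (extVF He) := by
  have hdHe : Continuous (fderiv ℝ He) := hHe.continuous_fderiv one_ne_zero
  unfold extVF pdQ pdP pdT pdE
  fun_prop

theorem fderiv_apply_eq_sum_pd {n : ℕ} (F : ExtPhase n → ℝ) (z w : ExtPhase n) :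
    fderiv ℝ F z w = ∑ i, w.1 i * pdQ F i z + ∑ i, w.2.1 i * pdP F i z
      + w.2.2.1 * pdT F z + w.2.2.2 * pdE F z := by
  obtain ⟨a, b, c, d⟩ := w
  have hw : ((a, b, c, d) : ExtPhase n)
      = ∑ i, a i • ((Pi.single i 1, 0, 0, 0) : ExtPhase n) + ∑ i, b i • (0, Pi.single i 1, 0, 0)
        + c • (0, 0, 1, 0) + d • (0, 0, 0, 1) := by
    simp [Prod.ext_iff, Prod.fst_sum, Prod.snd_sum, ← pi_eq_sum_univ']
  conv_lhs => rw [hw]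
  simp only [map_add, map_sum, map_smul, smul_eq_mul, pdQ, pdP, pdT, pdE]

theorem fderiv_apply_extVF {n : ℕ} (He I : ExtPhase n → ℝ) (z : ExtPhase n) :
    fderiv ℝ I z (extVF He z) = -extPB He I z := by
  simp only [fderiv_apply_eq_sum_pd, extPB, extVF, Finset.sum_sub_distrib, neg_mul,
    Finset.sum_neg_distrib]
  ring

/-- generalized Noether theorem, converse direction: if a
differentiable function `I` is constant along every differentiable solution of
the extended canonical equations of a continuously differentiable extended
Hamiltonian `He`, then the extended Poisson bracket `[He, I]_ext` vanishes at
every point of extended phase space. -/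
theorem generalized_noether_converse
    {n : ℕ} (He I : ExtPhase n → ℝ)
    (hHe : ContDiff ℝ 1 He) (hI : Differentiable ℝ I)
    (hconst : ∀ S : Set ℝ, Convex ℝ S → ∀ z : ℝ → ExtPhase n,
      (∀ s ∈ S, HasDerivWithinAt z (extVF He (z s)) S s) →
      ∀ s₁ ∈ S, ∀ s₂ ∈ S, I (z s₁) = I (z s₂)) :
    ∀ z₀ : ExtPhase n, extPB He I z₀ = 0 := by
  intro z₀
  obtain ⟨ε, hε, z, rfl, hz⟩ :=
    exists_eq_forall_mem_Icc_hasDerivWithinAt_of_continuous (continuous_extVF hHe) z₀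
  have h0 : (0 : ℝ) ∈ Icc 0 ε := ⟨le_rfl, hε.le⟩
  have hIz : HasDerivWithinAt (I ∘ z) (fderiv ℝ I (z 0) (extVF He (z 0))) (Icc 0 ε) 0 :=
    (hI _).hasFDerivAt.comp_hasDerivWithinAt 0 (hz 0 h0)
  have hIz_const : HasDerivWithinAt (I ∘ z) 0 (Icc 0 ε) 0 :=
    (hasDerivWithinAt_const 0 _ (I (z 0))).congr
      (fun s hs => hconst _ (convex_Icc 0 ε) z hz s hs 0 h0) rfl
  have := (uniqueDiffOn_Icc hε 0 h0).eq_deriv _ hIz hIz_const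
  rwa [fderiv_apply_extVF, neg_eq_zero] at this
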